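/- arXiv:1305.1150 — 4 statements merged into one kernel-verified Lean document; each statement's English description precedes it below -/
import Mathlib

section
/- Let n ≥ 2, let g₀ be a real symmetric positive definite n×n matrix and h a real symmetric n×n matrix. Set H = g₀⁻¹h, τ = Tr(H), H₀ = H − (τ/n)·Id, and suppose κ := Tr(H₀²) > 0 and τ ≥ 0. Define for t ≥ 0: a(t) = (2/n)·log((1 + tτ/4)² + (n·κ/16)·t²) and b(t) = (4/√(nκ))·arctan( (√(nκ)·t) / (4 + tτ) ) (with arctan taken in [0, π/2)). Then the curve g(t) = g₀·exp(a(t)·Id + b(t)·H₀) satisfies g(0) = g₀, g′(0) = h, and the geodesic equation g″ = (1/4)·Tr(g⁻¹g′g⁻¹g′)·g + g′g⁻¹g′ − (1/2)·Tr(g⁻¹g′)·g′ for all t ≥ 0. -/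
/-!
Write `g = g₀ · exp(a·1 + b·H₀)`. Since `1` and `H₀` commute, `g⁻¹g' = M := a'·1 + b'·H₀` and
`g'' = g (M² + M')`, while the right-hand side of the geodesic equation equals
`g (M² + ¼ tr(M²) - ½ tr(M) M)`. As `tr H₀ = 0`, the equation `M' = ¼ tr(M²) - ½ tr(M) M` splits
into two scalar ODEs for `α = a'` and `β = b'`. With `D(t) = (1 + tτ/4)² + (nκ/16)t²` one has
`a' = (2/n) D'/D` and `b' = 1/D`, and both ODEs reduce to the invariant `2 D'' D - D'² = nκ/4`.
-/

open Matrix Filter Topology NormedSpace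

section ExpCurve

variable {𝕂 𝔸 : Type*} [RCLike 𝕂] [NormedRing 𝔸] [NormedAlgebra 𝕂 𝔸] [NormedAlgebra ℚ 𝔸]
  [CompleteSpace 𝔸]

theorem hasDerivAt_exp_smul_add_smul {X Y : 𝔸} (hXY : Commute X Y) {a b : 𝕂 → 𝕂} {a' b' t : 𝕂}
    (ha : HasDerivAt a a' t) (hb : HasDerivAt b b' t) :
    HasDerivAt (fun s => exp (a s • X + b s • Y))
      (exp (a t • X + b t • Y) * (a' • X + b' • Y)) t := by
  have hsplit : ∀ s, exp (a s • X + b s • Y) = exp (a s • X) * exp (b s • Y) := fun s =>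
    exp_add_of_commute ((hXY.smul_left _).smul_right _)
  simp only [hsplit]
  refine (((hasDerivAt_exp_smul_const X (a t)).scomp t ha).fun_mul
    ((hasDerivAt_exp_smul_const Y (b t)).scomp t hb)).congr_deriv ?_
  have hX : X * exp (b t • Y) = exp (b t • Y) * X := ((hXY.smul_right (b t)).exp_right).eq
  simp only [Function.comp_apply, mul_add, mul_smul_comm, smul_mul_assoc, mul_assoc, hX]

end ExpCurve

section SecondDerivative

variable {𝕜 𝔸 : Type*} [NontriviallyNormedField 𝕜] [NormedRing 𝔸] [NormedAlgebra 𝕜 𝔸]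

theorem deriv_deriv_eq_of_hasDerivAt_mul {g M : 𝕜 → 𝔸} {M' : 𝔸} {t : 𝕜}
    (hg : ∀ᶠ s in 𝓝 t, HasDerivAt g (g s * M s) s) (hM : HasDerivAt M M' t) :
    deriv (deriv g) t = g t * M t * M t + g t * M' := by
  have hderiv : deriv g =ᶠ[𝓝 t] fun s => g s * M s := hg.mono fun s hs => hs.deriv
  rw [hderiv.deriv_eq]
  exact ((hg.self_of_nhds.fun_mul hM).deriv).trans (by rw [mul_assoc])

end SecondDerivative

namespace Matrix

variable {m 𝕜 : Type*} [Fintype m] [DecidableEq m] [Field 𝕜]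

noncomputable def ebinAcceleration (G V : Matrix m m 𝕜) : Matrix m m 𝕜 :=
  ((1 / 4) * (G⁻¹ * V * G⁻¹ * V).trace) • G + V * G⁻¹ * V - ((1 / 2) * (G⁻¹ * V).trace) • V

theorem ebinAcceleration_mul {G : Matrix m m 𝕜} (hG : IsUnit G) (M : Matrix m m 𝕜) :
    ebinAcceleration G (G * M) =
      G * M * M + G * (((1 / 4) * (M * M).trace) • 1 - ((1 / 2) * M.trace) • M) := by
  have hGM : G⁻¹ * (G * M) = M := nonsing_inv_mul_cancel_left G M ((isUnit_iff_isUnit_det G).mp hG)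
  simp only [ebinAcceleration, Matrix.mul_assoc, hGM, Matrix.mul_sub, Matrix.mul_smul,
    Matrix.mul_one]
  abel

theorem trace_smul_one_add_smul {X : Matrix m m 𝕜} (hX : X.trace = 0) (α β : 𝕜) :
    (α • 1 + β • X).trace = Fintype.card m * α := by
  simp [hX, mul_comm]

theorem trace_mul_self_smul_one_add_smul {X : Matrix m m 𝕜} (hX : X.trace = 0) (α β : 𝕜) :
    ((α • 1 + β • X) * (α • 1 + β • X)).trace = Fintype.card m * α ^ 2 + (X * X).trace * β ^ 2 := by
  simp only [Matrix.add_mul, Matrix.mul_add, smul_mul_assoc, mul_smul_comm, Matrix.mul_one,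
    Matrix.one_mul, trace_add, trace_smul, trace_one, hX, smul_eq_mul]
  ring

theorem smul_one_add_smul_eq_of_ode {X : Matrix m m 𝕜} (hX : X.trace = 0) {α β α' β' : 𝕜}
    (hα : α' = 1 / 4 * (Fintype.card m * α ^ 2 + (X * X).trace * β ^ 2)
      - 1 / 2 * (Fintype.card m * α) * α)
    (hβ : β' = -(1 / 2 * (Fintype.card m * α) * β)) :
    α' • 1 + β' • X = ((1 / 4) * ((α • 1 + β • X) * (α • 1 + β • X)).trace) • 1
      - ((1 / 2) * (α • 1 + β • X).trace) • (α • 1 + β • X) := by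
  rw [trace_mul_self_smul_one_add_smul hX, trace_smul_one_add_smul hX, hα, hβ]
  module

/- `HasDerivAt` and `deriv` only see the topology of `Matrix m m 𝕜`, so the lemmas for normed
algebras apply through the submultiplicative operator norm. -/

theorem hasDerivAt_mul_exp_smul_add_smul {𝕂 : Type*} [RCLike 𝕂]
    (g₀ : Matrix m m 𝕂) {X Y : Matrix m m 𝕂} (hXY : Commute X Y) {a b : 𝕂 → 𝕂} {a' b' t : 𝕂}
    (ha : HasDerivAt a a' t) (hb : HasDerivAt b b' t) :
    HasDerivAt (fun s => g₀ * exp (a s • X + b s • Y))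
      (g₀ * exp (a t • X + b t • Y) * (a' • X + b' • Y)) t := by
  rw [Matrix.mul_assoc]
  exact open scoped Norms.Operator in (hasDerivAt_exp_smul_add_smul hXY ha hb).const_mul g₀

theorem deriv_deriv_eq_ebinAcceleration {𝕜 : Type*} [NontriviallyNormedField 𝕜]
    {g M : 𝕜 → Matrix m m 𝕜} {M' : Matrix m m 𝕜} {t : 𝕜}
    (hg : ∀ᶠ s in 𝓝 t, HasDerivAt g (g s * M s) s) (hM : HasDerivAt M M' t) (hgt : IsUnit (g t))
    (hM' : M' = ((1 / 4) * (M t * M t).trace) • 1 - ((1 / 2) * (M t).trace) • M t) :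
    deriv (deriv g) t = ebinAcceleration (g t) (deriv g t) := by
  have hdd : deriv (deriv g) t = g t * M t * M t + g t * M' :=
    open scoped Norms.Operator in deriv_deriv_eq_of_hasDerivAt_mul hg hM
  have hdg : deriv g t = g t * M t :=
    open scoped Norms.Operator in hg.self_of_nhds.deriv
  rw [hdd, hdg, ebinAcceleration_mul hgt, hM']

end Matrix

section Scalar

variable (n τ κ : ℝ)

noncomputable def ebinDenom (t : ℝ) : ℝ := (1 + t * τ / 4) ^ 2 + (n * κ / 16) * t ^ 2

noncomputable def ebinRate (t : ℝ) : ℝ :=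
  2 / n * ((τ / 2 * (1 + t * τ / 4) + n * κ / 8 * t) / ebinDenom n τ κ t)

variable {n τ κ}

theorem ebinDenom_pos (hnκ : 0 < n * κ) (t : ℝ) : 0 < ebinDenom n τ κ t := by
  rcases eq_or_ne t 0 with rfl | ht
  · simp [ebinDenom]
  · unfold ebinDenom; positivity

theorem hasDerivAt_ebinDenom (t : ℝ) :
    HasDerivAt (ebinDenom n τ κ) (τ / 2 * (1 + t * τ / 4) + n * κ / 8 * t) t := by
  have hlin : HasDerivAt (fun s : ℝ => 1 + s * τ / 4) (τ / 4) t := by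
    simpa using (((hasDerivAt_id t).mul_const τ).div_const 4).const_add 1
  refine ((hlin.pow 2).add ((hasDerivAt_pow 2 t).const_mul (n * κ / 16))).congr_deriv ?_
  push_cast
  ring

theorem hasDerivAt_log_ebinDenom (hnκ : 0 < n * κ) (t : ℝ) :
    HasDerivAt (fun s => 2 / n * Real.log (ebinDenom n τ κ s)) (ebinRate n τ κ t) t :=
  ((hasDerivAt_ebinDenom t).log (ebinDenom_pos hnκ t).ne').const_mul _

theorem hasDerivAt_arctan_ebin (hnκ : 0 < n * κ) {t : ℝ} (ht : 4 + t * τ ≠ 0) :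
    HasDerivAt (fun s => 4 / √(n * κ) * Real.arctan (√(n * κ) * s / (4 + s * τ)))
      (ebinDenom n τ κ t)⁻¹ t := by
  set S := √(n * κ)
  have hS : 0 < S := Real.sqrt_pos.2 hnκ
  have hS2 : S ^ 2 = n * κ := Real.sq_sqrt hnκ.le
  have hquot : HasDerivAt (fun s => S * s / (4 + s * τ))
      ((S * (4 + t * τ) - S * t * τ) / (4 + t * τ) ^ 2) t := by
    have hnum : HasDerivAt (fun s : ℝ => S * s) S t := by
      simpa using (hasDerivAt_id t).const_mul S
    have hden : HasDerivAt (fun s : ℝ => 4 + s * τ) τ t := by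
      simpa using ((hasDerivAt_id t).mul_const τ).const_add 4
    exact hnum.div hden ht
  refine (((Real.hasDerivAt_arctan _).comp t hquot).const_mul (4 / S)).congr_deriv ?_
  have hD : ebinDenom n τ κ t ≠ 0 := (ebinDenom_pos hnκ t).ne'
  have h16 : (4 + t * τ) ^ 2 + S ^ 2 * t ^ 2 = 16 * ebinDenom n τ κ t := by
    rw [hS2, ebinDenom]; ring
  field_simp
  linear_combination -h16

theorem hasDerivAt_ebinRate (hn : n ≠ 0) (hnκ : 0 < n * κ) (t : ℝ) :
    HasDerivAt (ebinRate n τ κ)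
      (1 / 4 * (n * ebinRate n τ κ t ^ 2 + κ * (ebinDenom n τ κ t)⁻¹ ^ 2)
        - 1 / 2 * (n * ebinRate n τ κ t) * ebinRate n τ κ t) t := by
  have hlin : HasDerivAt (fun s : ℝ => τ / 2 * (1 + s * τ / 4) + n * κ / 8 * s)
      (τ ^ 2 / 8 + n * κ / 8) t := by
    refine ((((hasDerivAt_id t).mul_const τ).div_const 4).const_add 1 |>.const_mul (τ / 2)
      |>.add ((hasDerivAt_id t).const_mul (n * κ / 8))).congr_deriv ?_
    ring
  have hD := (ebinDenom_pos (τ := τ) hnκ t).ne'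
  refine ((hlin.div (hasDerivAt_ebinDenom t) hD).const_mul (2 / n)).congr_deriv ?_
  simp only [ebinRate]
  unfold ebinDenom at hD ⊢
  field_simp
  ring

theorem hasDerivAt_inv_ebinDenom (hn : n ≠ 0) (hnκ : 0 < n * κ) (t : ℝ) :
    HasDerivAt (fun s => (ebinDenom n τ κ s)⁻¹)
      (-(1 / 2 * (n * ebinRate n τ κ t) * (ebinDenom n τ κ t)⁻¹)) t := by
  have hD := (ebinDenom_pos (τ := τ) hnκ t).ne'
  refine ((hasDerivAt_ebinDenom t).inv hD).congr_deriv ?_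
  simp only [ebinRate]
  field_simp

end Scalar

attribute [local instance] Matrix.normedAddCommGroup Matrix.normedSpace

theorem ebin_geodesic_explicit_solution_general {n : ℕ} (hn : 2 ≤ n)
    (g₀ h H H₀ : Matrix (Fin n) (Fin n) ℝ) (τ κ : ℝ)
    (hg₀pd : g₀.PosDef)
    (hH : H = g₀⁻¹ * h) (hτ : τ = H.trace)
    (hH₀ : H₀ = H - (τ / (n : ℝ)) • (1 : Matrix (Fin n) (Fin n) ℝ))
    (hκ : κ = (H₀ * H₀).trace) (hκpos : 0 < κ) (hτnn : 0 ≤ τ)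
    (a b : ℝ → ℝ)
    (ha : ∀ t, a t = (2 / (n : ℝ)) *
      Real.log ((1 + t * τ / 4) ^ 2 + ((n : ℝ) * κ / 16) * t ^ 2))
    (hb : ∀ t, b t = (4 / Real.sqrt ((n : ℝ) * κ)) *
      Real.arctan ((Real.sqrt ((n : ℝ) * κ) * t) / (4 + t * τ)))
    (g : ℝ → Matrix (Fin n) (Fin n) ℝ)
    (hg : ∀ t, g t = g₀ * NormedSpace.exp
      (a t • (1 : Matrix (Fin n) (Fin n) ℝ) + b t • H₀)) :
    g 0 = g₀ ∧ deriv g 0 = h ∧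
    ∀ t, 0 ≤ t →
      deriv (deriv g) t =
        ((1 / 4) * ((g t)⁻¹ * deriv g t * (g t)⁻¹ * deriv g t).trace) • g t
          + deriv g t * (g t)⁻¹ * deriv g t
          - ((1 / 2) * ((g t)⁻¹ * deriv g t).trace) • deriv g t := by
  have hn0 : (n : ℝ) ≠ 0 := by positivity
  have hnκ : 0 < (n : ℝ) * κ := by positivity
  have hH₀tr : H₀.trace = 0 := by
    rw [hH₀, trace_sub, trace_smul, trace_one, Fintype.card_fin, ← hτ, smul_eq_mul,
      div_mul_cancel₀ _ hn0, sub_self]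
  set M : ℝ → Matrix (Fin n) (Fin n) ℝ :=
    fun s => ebinRate n τ κ s • 1 + (ebinDenom n τ κ s)⁻¹ • H₀ with hM
  have hgM : ∀ s, 0 < 4 + s * τ → HasDerivAt g (g s * M s) s := fun s hs => by
    have ha' := (hasDerivAt_log_ebinDenom hnκ s).congr_of_eventuallyEq (.of_forall ha)
    have hb' := (hasDerivAt_arctan_ebin hnκ hs.ne').congr_of_eventuallyEq (.of_forall hb)
    rw [hg s]
    exact (hasDerivAt_mul_exp_smul_add_smul g₀ (Commute.one_left H₀) ha' hb').congr_of_eventuallyEq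
      (.of_forall hg)
  have hg0 : g 0 = g₀ := by simp [hg, ha, hb]
  refine ⟨hg0, ?_, fun t ht => ?_⟩
  · have hM0 : M 0 = H := by
      have hrate : ebinRate n τ κ 0 = τ / n := by simp [ebinRate, ebinDenom]
      simp [hM, hrate, ebinDenom, hH₀]
    refine (hgM 0 (by norm_num)).deriv.trans ?_
    rw [hg0, hM0, hH]
    exact mul_nonsing_inv_cancel_left g₀ h ((isUnit_iff_isUnit_det g₀).mp hg₀pd.isUnit)
  · have hpos : ∀ᶠ s in 𝓝 t, 0 < 4 + s * τ :=
      continuousAt_const.eventually_lt (by fun_prop) (show (0 : ℝ) < 4 + t * τ by positivity)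
    have hα := hasDerivAt_ebinRate (τ := τ) hn0 hnκ t
    have hβ := hasDerivAt_inv_ebinDenom (τ := τ) hn0 hnκ t
    have hgt : IsUnit (g t) := by rw [hg t]; exact hg₀pd.isUnit.mul (isUnit_exp _)
    refine deriv_deriv_eq_ebinAcceleration (hpos.mono hgM)
      ((hα.smul_const 1).add (hβ.smul_const H₀)) hgt ?_
    refine smul_one_add_smul_eq_of_ode hH₀tr ?_ ?_ <;> simp only [Fintype.card_fin, ← hκ]

/-- Explicit geodesic of the (pointwise) Ebin L²-metric on positive definite
symmetric matrices, in the case `Tr(H₀²) > 0`, `Tr(H) ≥ 0`. -/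
theorem ebin_geodesic_explicit_solution {n : ℕ} (hn : 2 ≤ n)
    (g₀ h H H₀ : Matrix (Fin n) (Fin n) ℝ) (τ κ : ℝ)
    (hg₀pd : g₀.PosDef) (hg₀s : g₀.IsSymm) (hhs : h.IsSymm)
    (hH : H = g₀⁻¹ * h) (hτ : τ = H.trace)
    (hH₀ : H₀ = H - (τ / (n : ℝ)) • (1 : Matrix (Fin n) (Fin n) ℝ))
    (hκ : κ = (H₀ * H₀).trace) (hκpos : 0 < κ) (hτnn : 0 ≤ τ)
    (a b : ℝ → ℝ)
    (ha : ∀ t, a t = (2 / (n : ℝ)) *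
      Real.log ((1 + t * τ / 4) ^ 2 + ((n : ℝ) * κ / 16) * t ^ 2))
    (hb : ∀ t, b t = (4 / Real.sqrt ((n : ℝ) * κ)) *
      Real.arctan ((Real.sqrt ((n : ℝ) * κ) * t) / (4 + t * τ)))
    (g : ℝ → Matrix (Fin n) (Fin n) ℝ)
    (hg : ∀ t, g t = g₀ * NormedSpace.exp
      (a t • (1 : Matrix (Fin n) (Fin n) ℝ) + b t • H₀)) :
    g 0 = g₀ ∧ deriv g 0 = h ∧
    ∀ t, 0 ≤ t →
      deriv (deriv g) t =
        ((1 / 4) * ((g t)⁻¹ * deriv g t * (g t)⁻¹ * deriv g t).trace) • g t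
          + deriv g t * (g t)⁻¹ * deriv g t
          - ((1 / 2) * ((g t)⁻¹ * deriv g t).trace) • deriv g t :=
  ebin_geodesic_explicit_solution_general hn g₀ h H H₀ τ κ hg₀pd hH hτ hH₀ hκ hκpos hτnn a b ha hb g
    hg
end

section
/- Let n ≥ 1 and let a : [0,1] → ℝ^{n×n} be a C¹ path of real symmetric positive definite matrices. Define the pointwise norm ‖b‖_a = ( Tr(a⁻¹ b a⁻¹ b) · √(det a) )^{1/2} for symmetric b. Then | (det a(1))^{1/4} − (det a(0))^{1/4} | ≤ (√n / 4) · ∫₀¹ ‖a′(t)‖_{a(t)} dt. -/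
/-!
By Jacobi's formula, `f = (det a)^{1/4}` has derivative `f' = ¼ f Tr(a⁻¹a′)`. Writing `a⁻¹ = S²`
with `S` symmetric, `Tr(a⁻¹a′) = Tr X` for the symmetric matrix `X = S a′ S`, and Cauchy–Schwarz
on the diagonal gives `(Tr X)² ≤ n Tr(X²) = n Tr(a⁻¹a′a⁻¹a′)`. Hence `|f'| ≤ (√n/4) ‖a′‖_a`, and
the claim follows by integrating this bound.
-/

open Matrix

attribute [local instance] Matrix.normedAddCommGroup Matrix.normedSpace

open Set Topology MeasureTheory

theorem abs_sub_le_integral_of_abs_deriv_le {f f' g : ℝ → ℝ} {a b : ℝ} (hab : a ≤ b)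
    (hf : ContinuousOn f (Icc a b)) (hderiv : ∀ x ∈ Ioo a b, HasDerivAt f (f' x) x)
    (hg : IntegrableOn g (Ioo a b)) (hbound : ∀ x ∈ Ioo a b, |f' x| ≤ g x) :
    |f b - f a| ≤ ∫ x in a..b, g x := by
  rw [← integrableOn_Icc_iff_integrableOn_Ioo] at hg
  refine abs_sub_le_iff.2 ⟨?_, ?_⟩
  · exact intervalIntegral.sub_le_integral_of_hasDeriv_right_of_le hab hf
      (fun x hx => (hderiv x hx).hasDerivWithinAt) hg
      fun x hx => (le_abs_self _).trans (hbound x hx)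
  · have hneg := intervalIntegral.sub_le_integral_of_hasDeriv_right_of_le hab hf.neg
      (fun x hx => (hderiv x hx).neg.hasDerivWithinAt) hg
      fun x hx => (neg_le_abs _).trans (hbound x hx)
    simp only [Pi.neg_apply] at hneg
    linarith

namespace Matrix

variable {ι : Type*} [Fintype ι]

theorem sum_det_updateRow_eq_trace_adjugate_mul [DecidableEq ι] {R : Type*} [CommRing R]
    (A B : Matrix ι ι R) : ∑ i, (A.updateRow i (B i)).det = (A.adjugate * B).trace := by
  have hrow : ∀ i, (A.updateRow i (B i)).det = ∑ j, A.adjugate j i * B i j := fun i => by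
    rw [← cramer_transpose_apply, cramer_eq_adjugate_mulVec]
    simp [mulVec, dotProduct, ← adjugate_transpose]
  simp only [hrow, trace, diag, mul_apply]
  rw [Finset.sum_comm]

noncomputable def detRowContinuousMultilinear [DecidableEq ι] (𝕜 : Type*)
    [NontriviallyNormedField 𝕜] : ContinuousMultilinearMap 𝕜 (fun _ : ι => ι → 𝕜) 𝕜 where
  toMultilinearMap := (detRowAlternating : (ι → 𝕜) [⋀^ι]→ₗ[𝕜] 𝕜).toMultilinearMap
  cont := continuous_id.matrix_det

/-- Jacobi's formula; `det` is multilinear in the rows, so its derivative varies one row at a time. -/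
theorem hasDerivAt_det [DecidableEq ι] {𝕜 : Type*} [NontriviallyNormedField 𝕜]
    {a : 𝕜 → Matrix ι ι 𝕜} {A' : Matrix ι ι 𝕜} {t : 𝕜} (h : HasDerivAt a A' t) :
    HasDerivAt (fun s => (a s).det) ((a t).adjugate * A').trace t := by
  refine (((detRowContinuousMultilinear 𝕜).hasFDerivAt (a t)).comp_hasDerivAt t h).congr_deriv ?_
  rw [← sum_det_updateRow_eq_trace_adjugate_mul]
  exact (detRowContinuousMultilinear 𝕜).linearDeriv_apply (a t) A'

theorem hasDerivAt_det_rpow [DecidableEq ι] {a : ℝ → Matrix ι ι ℝ} {A' : Matrix ι ι ℝ} {t : ℝ}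
    (p : ℝ) (h : HasDerivAt a A' t) (hdet : (a t).det ≠ 0) :
    HasDerivAt (fun s => (a s).det ^ p) (p * (a t).det ^ p * ((a t)⁻¹ * A').trace) t := by
  refine ((hasDerivAt_det h).rpow_const (Or.inl hdet)).congr_deriv ?_
  rw [inv_def, smul_mul, trace_smul, smul_eq_mul, Ring.inverse_eq_inv', Real.rpow_sub_one hdet]
  field_simp

theorem isSymm_of_hasDerivAt {𝕜 : Type*} [NontriviallyNormedField 𝕜] {a : 𝕜 → Matrix ι ι 𝕜}
    {A' : Matrix ι ι 𝕜} {t : 𝕜} (h : HasDerivAt a A' t) (hsymm : ∀ᶠ s in 𝓝 t, (a s).IsSymm) :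
    A'.IsSymm := by
  ext i j
  have hji := hasDerivAt_pi.1 (hasDerivAt_pi.1 h j) i
  have hij := hasDerivAt_pi.1 (hasDerivAt_pi.1 h i) j
  refine hji.unique (hij.congr_of_eventuallyEq ?_)
  filter_upwards [hsymm] with s hs
  exact hs.apply i j

theorem sq_trace_le_card_mul_trace_mul_transpose {R : Type*} [CommRing R] [LinearOrder R]
    [IsStrictOrderedRing R] (X : Matrix ι ι R) :
    X.trace ^ 2 ≤ Fintype.card ι * (X * Xᵀ).trace := by
  have hdiag : ∀ i, X i i ^ 2 ≤ ∑ j, X i j ^ 2 := fun i =>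
    Finset.single_le_sum (f := fun j => X i j ^ 2) (fun j _ => sq_nonneg _) (Finset.mem_univ i)
  calc X.trace ^ 2 ≤ Fintype.card ι * ∑ i, X i i ^ 2 := sq_sum_le_card_mul_sum_sq
    _ ≤ Fintype.card ι * ∑ i, ∑ j, X i j ^ 2 := by gcongr with i; exact hdiag i
    _ = Fintype.card ι * (X * Xᵀ).trace := by simp [trace, mul_apply, sq]

open scoped MatrixOrder in
theorem sq_trace_inv_mul_le [DecidableEq ι] {A B : Matrix ι ι ℝ} (hA : A.PosDef)
    (hB : B.IsSymm) : (A⁻¹ * B).trace ^ 2 ≤ Fintype.card ι * (A⁻¹ * B * A⁻¹ * B).trace := by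
  set S := CFC.sqrt A⁻¹
  have hSS : S * S = A⁻¹ := CFC.sqrt_mul_sqrt_self _ hA.inv.posSemidef.nonneg
  have hS : Sᵀ = S := by
    simpa [star_eq_conjTranspose] using (CFC.sqrt_nonneg A⁻¹).isSelfAdjoint.star_eq
  have hX : (S * B * S)ᵀ = S * B * S := by
    rw [transpose_mul, transpose_mul, hS, hB.eq, mul_assoc]
  have htr : (A⁻¹ * B).trace = (S * B * S).trace := by
    rw [← hSS, mul_assoc, trace_mul_comm, mul_assoc]
  have htr_sq : (A⁻¹ * B * A⁻¹ * B).trace = (S * B * S * (S * B * S)ᵀ).trace := by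
    rw [hX, ← hSS, show S * S * B * (S * S) * B = S * (S * B * S * S * B) by noncomm_ring,
      trace_mul_comm]
    noncomm_ring
  rw [htr, htr_sq]
  exact sq_trace_le_card_mul_trace_mul_transpose _

noncomputable def ebinNorm [DecidableEq ι] (A B : Matrix ι ι ℝ) : ℝ :=
  √((A⁻¹ * B * A⁻¹ * B).trace * √A.det)

theorem abs_det_rpow_mul_trace_inv_mul_le [DecidableEq ι] {A B : Matrix ι ι ℝ} (hA : A.PosDef)
    (hB : B.IsSymm) :
    |A.det ^ ((1 : ℝ) / 4) * (A⁻¹ * B).trace| ≤ √(Fintype.card ι) * ebinNorm A B := by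
  have hquarter : (A.det ^ ((1 : ℝ) / 4)) ^ 2 = √A.det := by
    rw [← Real.rpow_natCast, ← Real.rpow_mul hA.det_pos.le, Real.sqrt_eq_rpow]
    norm_num
  rw [ebinNorm, ← Real.sqrt_mul (Nat.cast_nonneg _)]
  refine Real.abs_le_sqrt ?_
  calc (A.det ^ ((1 : ℝ) / 4) * (A⁻¹ * B).trace) ^ 2
      = √A.det * (A⁻¹ * B).trace ^ 2 := by rw [mul_pow, hquarter]
    _ ≤ √A.det * (Fintype.card ι * (A⁻¹ * B * A⁻¹ * B).trace) :=
        mul_le_mul_of_nonneg_left (sq_trace_inv_mul_le hA hB) (Real.sqrt_nonneg _)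
    _ = Fintype.card ι * ((A⁻¹ * B * A⁻¹ * B).trace * √A.det) := by ring

theorem _root_.ContinuousOn.ebinNorm [DecidableEq ι] {X : Type*} [TopologicalSpace X]
    {s : Set X} {a b : X → Matrix ι ι ℝ} (ha : ContinuousOn a s) (hb : ContinuousOn b s)
    (hdet : ∀ x ∈ s, (a x).det ≠ 0) : ContinuousOn (fun x => ebinNorm (a x) (b x)) s := by
  have hinv : ContinuousOn (fun x => (a x)⁻¹) s := fun x hx =>
    (continuousAt_matrix_inv _ (by
      rw [Ring.inverse_eq_inv']; exact continuousAt_inv₀ (hdet x hx))).comp_continuousWithinAt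
      (ha x hx)
  unfold Matrix.ebinNorm
  fun_prop

theorem integrableOn_ebinNorm_deriv [DecidableEq ι] {a : ℝ → Matrix ι ι ℝ} {x y : ℝ} (hxy : x < y)
    (ha : ContDiffOn ℝ 1 a (Icc x y)) (hdet : ∀ t ∈ Icc x y, (a t).det ≠ 0) :
    IntegrableOn (fun t => ebinNorm (a t) (deriv a t)) (Ioo x y) := by
  have hcont := ha.continuousOn.ebinNorm
    (ha.continuousOn_derivWithin (uniqueDiffOn_Icc hxy) le_rfl) hdet
  refine (hcont.integrableOn_Icc.mono_set Ioo_subset_Icc_self).congr_fun (fun t ht => ?_)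
    measurableSet_Ioo
  exact congrArg (ebinNorm (a t)) (derivWithin_of_mem_nhds (Icc_mem_nhds ht.1 ht.2))

end Matrix

theorem det_quarter_root_lipschitz_general {n : ℕ}
    (a : ℝ → Matrix (Fin n) (Fin n) ℝ)
    (hC1 : ContDiffOn ℝ 1 a (Set.Icc (0 : ℝ) 1))
    (hpd : ∀ t ∈ Set.Icc (0 : ℝ) 1, (a t).PosDef) :
    |((a 1).det) ^ ((1 : ℝ) / 4) - ((a 0).det) ^ ((1 : ℝ) / 4)| ≤
      (Real.sqrt n / 4) *
        ∫ t in (0 : ℝ)..1,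
          Real.sqrt
            (((a t)⁻¹ * deriv a t * (a t)⁻¹ * deriv a t).trace *
              Real.sqrt (a t).det) := by
  have hnhds : ∀ t ∈ Ioo (0 : ℝ) 1, Icc (0 : ℝ) 1 ∈ 𝓝 t := fun t ht => Icc_mem_nhds ht.1 ht.2
  have hderiv : ∀ t ∈ Ioo (0 : ℝ) 1, HasDerivAt a (deriv a t) t := fun t ht =>
    ((hC1.differentiableOn one_ne_zero).differentiableAt (hnhds t ht)).hasDerivAt
  have hdet : ∀ t ∈ Icc (0 : ℝ) 1, (a t).det ≠ 0 := fun t ht => (hpd t ht).det_pos.ne'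
  have hsymm : ∀ t ∈ Ioo (0 : ℝ) 1, (deriv a t).IsSymm := fun t ht =>
    isSymm_of_hasDerivAt (hderiv t ht) <| Filter.mem_of_superset (hnhds t ht) fun s hs =>
      isHermitian_iff_isSymm.1 (hpd s hs).isHermitian
  have hcont : ContinuousOn (fun t => (a t).det ^ ((1 : ℝ) / 4)) (Icc 0 1) :=
    (continuous_id.matrix_det.comp_continuousOn' hC1.continuousOn).rpow_const
      fun _ _ => Or.inr (by norm_num)
  show _ ≤ √n / 4 * ∫ t in (0 : ℝ)..1, ebinNorm (a t) (deriv a t)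
  rw [← intervalIntegral.integral_const_mul]
  refine abs_sub_le_integral_of_abs_deriv_le zero_le_one hcont
    (fun t ht => hasDerivAt_det_rpow _ (hderiv t ht) (hdet t (Ioo_subset_Icc_self ht)))
    ((integrableOn_ebinNorm_deriv zero_lt_one hC1 hdet).const_mul _) fun t ht => ?_
  have hbound := abs_det_rpow_mul_trace_inv_mul_le (hpd t (Ioo_subset_Icc_self ht)) (hsymm t ht)
  rw [Fintype.card_fin] at hbound
  rw [mul_assoc, abs_mul, abs_of_pos (by norm_num : (0 : ℝ) < 1 / 4)]
  linarith

/-- Pointwise Lipschitz continuity of the fourth root of the determinant (i.e. the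
square root of the volume density) along a `C¹` path of symmetric positive definite
matrices, with respect to the pointwise Ebin norm. -/
theorem det_quarter_root_lipschitz {n : ℕ} (hn : 1 ≤ n)
    (a : ℝ → Matrix (Fin n) (Fin n) ℝ)
    (hC1 : ContDiffOn ℝ 1 a (Set.Icc (0 : ℝ) 1))
    (hsymm : ∀ t ∈ Set.Icc (0 : ℝ) 1, (a t).IsSymm)
    (hpd : ∀ t ∈ Set.Icc (0 : ℝ) 1, (a t).PosDef) :
    |((a 1).det) ^ ((1 : ℝ) / 4) - ((a 0).det) ^ ((1 : ℝ) / 4)| ≤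
      (Real.sqrt n / 4) *
        ∫ t in (0 : ℝ)..1,
          Real.sqrt
            (((a t)⁻¹ * deriv a t * (a t)⁻¹ * deriv a t).trace *
              Real.sqrt (a t).det) :=
  det_quarter_root_lipschitz_general a hC1 hpd
end

section
/- Let c ∈ C^∞(S¹, ℝ²) be an immersion (c_θ(θ) ≠ 0 for all θ), with unit tangent v = c_θ/|c_θ| and unit normal n = J v (J = rotation by π/2). Define R(c) = √|c_θ|·v ∈ C^∞(S¹, ℝ²). Then for every smooth variation h ∈ C^∞(S¹, ℝ²), the derivative DR(c)·h satisfies ∫_{S¹} |DR(c)·h|² dθ = ∫_{S¹} ( ⟨D_s h, n⟩² + (1/4)·⟨D_s h, v⟩² ) |c_θ| dθ, where D_s h = h_θ/|c_θ|. That is, the pullback by the square root velocity transform R of the flat L²-metric G(e,f) = ∫_{S¹} ⟨e,f⟩ dθ equals the elastic metric G^{a,b} with a = 1, b = 1/2. -/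
/-- Euclidean inner product on `ℝ²`. -/
def dot2 (x y : ℝ × ℝ) : ℝ := x.1 * y.1 + x.2 * y.2

/-- Euclidean norm on `ℝ²`. -/
noncomputable def enorm2 (x : ℝ × ℝ) : ℝ := Real.sqrt (dot2 x x)

/-- Rotation by `π/2` in `ℝ²`. -/
def Jrot (x : ℝ × ℝ) : ℝ × ℝ := (-x.2, x.1)

/-- The square root velocity transform `R(c) = √|c_θ| · v` of a plane curve. -/
noncomputable def srvt (c : ℝ → ℝ × ℝ) (θ : ℝ) : ℝ × ℝ :=
  Real.sqrt (enorm2 (deriv c θ)) • ((enorm2 (deriv c θ))⁻¹ • deriv c θ)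

lemma key_pointwise (u w : ℝ × ℝ) (hu : u ≠ 0) :
    dot2
      (deriv (fun ε : ℝ =>
        Real.sqrt (enorm2 (u + ε • w)) • ((enorm2 (u + ε • w))⁻¹ • (u + ε • w))) 0)
      (deriv (fun ε : ℝ =>
        Real.sqrt (enorm2 (u + ε • w)) • ((enorm2 (u + ε • w))⁻¹ • (u + ε • w))) 0)
    = ((dot2 ((enorm2 u)⁻¹ • w) (Jrot ((enorm2 u)⁻¹ • u))) ^ 2
        + (1 / 4) * (dot2 ((enorm2 u)⁻¹ • w) ((enorm2 u)⁻¹ • u)) ^ 2) * enorm2 u := by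
  have hu1 : u.1 ≠ 0 ∨ u.2 ≠ 0 := by
    by_contra hcon
    push_neg at hcon
    exact hu (Prod.ext hcon.1 hcon.2)
  have hr0 : 0 < dot2 u u := by
    rcases hu1 with h1 | h1 <;>
      · simp only [dot2]
        nlinarith [sq_nonneg u.1, sq_nonneg u.2, mul_self_pos.mpr h1]
  -- rewrite the function using rpow
  have key : (fun ε : ℝ =>
      Real.sqrt (enorm2 (u + ε • w)) • ((enorm2 (u + ε • w))⁻¹ • (u + ε • w)))
      = fun ε : ℝ => (dot2 (u + ε • w) (u + ε • w)) ^ (-(1/4) : ℝ) • (u + ε • w) := by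
    funext ε
    set q := u + ε • w with hq
    have hq0 : 0 ≤ dot2 q q := by
      simp only [dot2]; nlinarith [sq_nonneg q.1, sq_nonneg q.2]
    rcases eq_or_lt_of_le hq0 with h0 | hpos
    · have hq1 : q = 0 := by
        have e1 : q.1 * q.1 + q.2 * q.2 = 0 := by simpa [dot2] using h0.symm
        have : q.1 = 0 ∧ q.2 = 0 := by constructor <;> nlinarith [sq_nonneg q.1, sq_nonneg q.2]
        exact Prod.ext this.1 this.2
      simp [hq1]
    · rw [smul_smul]
      congr 1
      rw [enorm2, Real.sqrt_eq_rpow (dot2 q q), ← Real.rpow_neg hq0,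
        Real.sqrt_eq_rpow, ← Real.rpow_mul hq0, ← Real.rpow_add hpos]
      norm_num
  rw [key]
  -- compute the derivative
  have hq' : HasDerivAt (fun ε : ℝ => u + ε • w) w 0 := by
    simpa using ((hasDerivAt_id (0:ℝ)).smul_const w).const_add u
  have h1 : HasDerivAt (fun ε : ℝ => u.1 + ε * w.1) w.1 0 := by
    simpa using ((hasDerivAt_id (0:ℝ)).mul_const w.1).const_add u.1
  have h2 : HasDerivAt (fun ε : ℝ => u.2 + ε * w.2) w.2 0 := by
    simpa using ((hasDerivAt_id (0:ℝ)).mul_const w.2).const_add u.2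
  have hρ : HasDerivAt (fun ε : ℝ => dot2 (u + ε • w) (u + ε • w)) (2 * dot2 u w) 0 := by
    have := (h1.mul h1).add (h2.mul h2)
    have hfun : (fun ε : ℝ => dot2 (u + ε • w) (u + ε • w))
        = fun ε : ℝ => (u.1 + ε * w.1) * (u.1 + ε * w.1) + (u.2 + ε * w.2) * (u.2 + ε * w.2) := by
      funext ε; simp [dot2]
    rw [hfun]
    refine HasDerivAt.congr_deriv this ?_
    simp [dot2]; ring
  have hρ0 : dot2 (u + (0:ℝ) • w) (u + (0:ℝ) • w) ≠ 0 := by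
    simpa using hr0.ne'
  have hlam := hρ.rpow_const (p := -(1/4)) (Or.inl hρ0)
  have hD := hlam.smul hq'
  rw [HasDerivAt.deriv (f := fun ε : ℝ => dot2 (u + ε • w) (u + ε • w) ^ (-(1/4):ℝ) • (u + ε • w)) hD]
  simp only [zero_smul, add_zero] at *
  set t : ℝ := (dot2 u u) ^ (-(1/4) : ℝ) with hts
  have hE0 : 0 < enorm2 u := Real.sqrt_pos.mpr hr0
  have ht4 : t ^ 4 * (u.1 * u.1 + u.2 * u.2) = 1 := by
    rw [hts, ← Real.rpow_natCast ((dot2 u u) ^ (-(1/4):ℝ)) 4, ← Real.rpow_mul hr0.le,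
      show (-(1/4):ℝ) * ((4:ℕ):ℝ) = -1 by norm_num, Real.rpow_neg_one]
    have : dot2 u u = u.1 * u.1 + u.2 * u.2 := rfl
    rw [← this]
    field_simp
  have ht5 : (dot2 u u) ^ (-(1/4:ℝ) - 1) = t ^ 5 := by
    rw [hts, ← Real.rpow_natCast ((dot2 u u) ^ (-(1/4):ℝ)) 5, ← Real.rpow_mul hr0.le]
    congr 1
    norm_num
  have hEinv : (enorm2 u)⁻¹ = t ^ 2 := by
    rw [enorm2, Real.sqrt_eq_rpow, ← Real.rpow_neg hr0.le, hts,
      ← Real.rpow_natCast ((dot2 u u) ^ (-(1/4):ℝ)) 2, ← Real.rpow_mul hr0.le]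
    congr 1
    norm_num
  have hE2 : enorm2 u * t ^ 2 = 1 := by
    rw [← hEinv]
    field_simp
  rw [ht5, hEinv]
  simp only [dot2, Jrot, Prod.fst_add, Prod.snd_add, Prod.smul_fst, Prod.smul_snd,
    smul_eq_mul]
  linear_combination
    ((1/4) * (u.1 * w.1 + u.2 * w.2) ^ 2 * t ^ 6 - t ^ 2 * (w.1 * w.1 + w.2 * w.2)) * ht4
    - (t ^ 6 * (u.1 * u.1 + u.2 * u.2) * (w.1 * w.1 + w.2 * w.2)
        - (3/4) * t ^ 6 * (u.1 * w.1 + u.2 * w.2) ^ 2) * hE2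

/-- The pullback of the flat `L²`-metric under the square root velocity transform is
the elastic metric `G^{a,b}` with `a = 1`, `b = 1/2`: for every variation `h` of an
immersed closed plane curve `c`,
`∫ |DR(c)·h|² dθ = ∫ (⟨D_s h, n⟩² + ¼⟨D_s h, v⟩²)|c_θ| dθ`. -/
theorem srvt_pullback_elastic_metric
    (c : ℝ → ℝ × ℝ) (hc : ContDiff ℝ (⊤ : ℕ∞) c) (hcper : Function.Periodic c (2 * Real.pi))
    (hcimm : ∀ θ, deriv c θ ≠ 0)
    (h : ℝ → ℝ × ℝ) (hh : ContDiff ℝ (⊤ : ℕ∞) h) (hhper : Function.Periodic h (2 * Real.pi)) :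
    (∫ θ in (0 : ℝ)..(2 * Real.pi),
        dot2 (deriv (fun ε : ℝ => srvt (fun s => c s + ε • h s) θ) 0)
          (deriv (fun ε : ℝ => srvt (fun s => c s + ε • h s) θ) 0))
    = ∫ θ in (0 : ℝ)..(2 * Real.pi),
        ((dot2 ((enorm2 (deriv c θ))⁻¹ • deriv h θ)
            (Jrot ((enorm2 (deriv c θ))⁻¹ • deriv c θ))) ^ 2
          + (1 / 4) * (dot2 ((enorm2 (deriv c θ))⁻¹ • deriv h θ)
              ((enorm2 (deriv c θ))⁻¹ • deriv c θ)) ^ 2)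
          * enorm2 (deriv c θ) := by
  apply intervalIntegral.integral_congr
  intro θ _
  have hfun : (fun ε : ℝ => srvt (fun s => c s + ε • h s) θ)
      = fun ε : ℝ => Real.sqrt (enorm2 (deriv c θ + ε • deriv h θ)) •
          ((enorm2 (deriv c θ + ε • deriv h θ))⁻¹ • (deriv c θ + ε • deriv h θ)) := by
    funext ε
    have hd : deriv (fun s => c s + ε • h s) θ = deriv c θ + ε • deriv h θ := by
      have hcd := (hc.differentiable (by simp) θ).hasDerivAt
      have hhd := ((hh.differentiable (by simp) θ).hasDerivAt).const_smul ε
      exact (hcd.add hhd).deriv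
    simp only [srvt, hd]
  simp only [hfun]
  exact key_pointwise (deriv c θ) (deriv h θ) (hcimm θ)
end

section
/- Let c : [0,1] × S¹ → ℝ² be a smooth path of immersed plane curves (c(t, ·)_θ ≠ 0 for all t), with unit normal n(t,θ) and arclength element ds = |c_θ| dθ; write ℓ(t) = ∫_{S¹} |c_θ(t,θ)| dθ for the length. Let A > 0 and suppose Ψ : [0,1] × S¹ → ℝ satisfies Ψ(t,θ) ≥ A·ℓ(t) for all (t,θ). Then the 'area swept out' satisfies ∫₀¹ ∫_{S¹} |⟨c_t, n⟩| ds dt ≤ (1/√A) · ∫₀¹ ( ∫_{S¹} Ψ·|⟨c_t, n⟩|² ds )^{1/2} dt. In particular, the swept-out area is bounded by (1/√A) times the length of the path in the almost local metric G^Ψ with weight Ψ ≥ A·ℓ. -/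
open MeasureTheory

lemma continuous_dot2 : Continuous (fun p : (ℝ × ℝ) × (ℝ × ℝ) => dot2 p.1 p.2) := by
  unfold dot2; fun_prop

lemma continuous_enorm2 : Continuous enorm2 := by
  unfold enorm2 dot2
  exact Real.continuous_sqrt.comp (by fun_prop)

lemma continuous_Jrot : Continuous Jrot := by unfold Jrot; fun_prop

lemma enorm2_nonneg (x : ℝ × ℝ) : 0 ≤ enorm2 x := Real.sqrt_nonneg _

lemma enorm2_pos {x : ℝ × ℝ} (hx : x ≠ 0) : 0 < enorm2 x := by
  apply Real.sqrt_pos.2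
  rcases eq_or_ne x.1 0 with h1 | h1
  · have h2 : x.2 ≠ 0 := by
      intro h2; exact hx (Prod.ext h1 h2)
    have := mul_self_pos.2 h2
    unfold dot2; nlinarith
  · have := mul_self_pos.2 h1
    unfold dot2; nlinarith

/-- The Cauchy–Schwarz step on a fixed curve. -/
lemma cs_step (f w Ψ : ℝ → ℝ) (a b : ℝ) (hab : a ≤ b)
    (hf : Continuous f) (hw : Continuous w) (hΨc : Continuous Ψ)
    (hw0 : ∀ θ, 0 ≤ w θ) (A : ℝ) (hA : 0 < A)
    (hΨb : ∀ θ, A * (∫ σ in a..b, w σ) ≤ Ψ θ) :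
    ∫ θ in a..b, |f θ| * w θ
      ≤ (1 / Real.sqrt A) * Real.sqrt (∫ θ in a..b, Ψ θ * f θ ^ 2 * w θ) := by
  set μ := volume.restrict (Set.Ioc a b) with hμ
  have h22 : Real.HolderConjugate 2 2 := by
    constructor <;> norm_num
  set u : ℝ → ℝ := fun θ => |f θ| * Real.sqrt (w θ) with hu
  set v : ℝ → ℝ := fun θ => Real.sqrt (w θ) with hv
  have hcu : Continuous u := (hf.abs).mul (Real.continuous_sqrt.comp hw)
  have hcv : Continuous v := Real.continuous_sqrt.comp hw
  have husq : ∀ θ, u θ ^ 2 = f θ ^ 2 * w θ := by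
    intro θ
    simp only [hu, mul_pow, sq_abs, Real.sq_sqrt (hw0 θ)]
  have hvsq : ∀ θ, v θ ^ 2 = w θ := fun θ => Real.sq_sqrt (hw0 θ)
  have hmu : MemLp u (ENNReal.ofReal 2) μ := by
    rw [show ENNReal.ofReal 2 = 2 by norm_num]
    rw [memLp_two_iff_integrable_sq hcu.aestronglyMeasurable.restrict]
    exact (hcu.pow 2).integrableOn_Ioc
  have hmv : MemLp v (ENNReal.ofReal 2) μ := by
    rw [show ENNReal.ofReal 2 = 2 by norm_num]
    rw [memLp_two_iff_integrable_sq hcv.aestronglyMeasurable.restrict]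
    exact (hcv.pow 2).integrableOn_Ioc
  have key := integral_mul_le_Lp_mul_Lq_of_nonneg h22
    (Filter.Eventually.of_forall fun θ => mul_nonneg (abs_nonneg _) (Real.sqrt_nonneg _))
    (Filter.Eventually.of_forall fun θ => Real.sqrt_nonneg _) hmu hmv
  have hrw : ∀ g : ℝ → ℝ, (∫ x, g x ^ (2:ℝ) ∂μ) = ∫ x, g x ^ (2:ℕ) ∂μ := by
    intro g; congr 1; funext x
    rw [show ((2:ℝ)) = ((2:ℕ):ℝ) by norm_num]
    all_goals exact Real.rpow_natCast (g x) 2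
  rw [hrw u, hrw v] at key
  simp only [husq, hvsq] at key
  have huv : ∀ θ, u θ * v θ = |f θ| * w θ := by
    intro θ
    simp only [hu, hv, mul_assoc, Real.mul_self_sqrt (hw0 θ)]
  simp only [mul_assoc, Real.mul_self_sqrt, hw0] at key
  have hconv : ∀ g : ℝ → ℝ, (∫ θ in a..b, g θ) = ∫ θ, g θ ∂μ := by
    intro g; rw [intervalIntegral.integral_of_le hab]
  rw [hconv, hconv]
  set I := ∫ x, f x ^ 2 * w x ∂μ with hI
  set L := ∫ x, w x ∂μ with hL
  have hΨb' : ∀ x, A * L ≤ Ψ x := by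
    intro x; rw [hL, ← hconv]; exact hΨb x
  have hI0 : 0 ≤ I := integral_nonneg fun x => mul_nonneg (sq_nonneg _) (hw0 x)
  have hL0 : 0 ≤ L := integral_nonneg fun x => hw0 x
  have key2 : (∫ x, |f x| * w x ∂μ) ≤ Real.sqrt (I * L) := by
    rw [Real.sqrt_mul hI0, Real.sqrt_eq_rpow, Real.sqrt_eq_rpow]
    exact key
  refine key2.trans ?_
  have hmono : A * L * I ≤ ∫ x, Ψ x * f x ^ 2 * w x ∂μ := by
    have heq : A * L * I = ∫ x, (A * L) * (f x ^ 2 * w x) ∂μ := by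
      rw [integral_const_mul, mul_assoc]
    rw [heq]
    apply setIntegral_mono_on
    · exact ((continuous_const.mul ((hf.pow 2).mul hw))).integrableOn_Ioc
    · exact ((hΨc.mul (hf.pow 2)).mul hw).integrableOn_Ioc
    · exact measurableSet_Ioc
    · intro x _
      rw [mul_assoc (Ψ x)]
      exact mul_le_mul_of_nonneg_right (hΨb' x)
        (mul_nonneg (sq_nonneg _) (hw0 x))
  have h2 : I * L ≤ (1/A) * ∫ x, Ψ x * f x ^ 2 * w x ∂μ := by
    have hring : I * L * A = A * L * I := by ring
    rw [one_div, inv_mul_eq_div, le_div_iff₀ hA, hring]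
    exact hmono
  calc Real.sqrt (I * L) ≤ Real.sqrt ((1/A) * ∫ x, Ψ x * f x ^ 2 * w x ∂μ) :=
        Real.sqrt_le_sqrt h2
    _ = (1 / Real.sqrt A) * Real.sqrt (∫ x, Ψ x * f x ^ 2 * w x ∂μ) := by
        rw [Real.sqrt_mul (by positivity), one_div, one_div, Real.sqrt_inv]

/-- For a path of immersed closed plane curves, the area swept out is bounded by
`1/√A` times the length of the path in the almost local metric `G^Ψ`, whenever the
weight satisfies `Ψ ≥ A·ℓ` (length). -/
theorem swept_area_le_path_length
    (c : ℝ → ℝ → ℝ × ℝ) (hc : ContDiff ℝ (⊤ : ℕ∞) (Function.uncurry c))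
    (hcper : ∀ t, Function.Periodic (c t) (2 * Real.pi))
    (hcimm : ∀ t θ, deriv (c t) θ ≠ 0)
    (A : ℝ) (hA : 0 < A)
    (Ψ : ℝ → ℝ → ℝ) (hΨcont : Continuous (Function.uncurry Ψ))
    (hΨ : ∀ t θ, A * (∫ σ in (0 : ℝ)..(2 * Real.pi), enorm2 (deriv (c t) σ)) ≤ Ψ t θ) :
    (∫ t in (0 : ℝ)..1, ∫ θ in (0 : ℝ)..(2 * Real.pi),
        |dot2 (deriv (fun s => c s θ) t)
            (Jrot ((enorm2 (deriv (c t) θ))⁻¹ • deriv (c t) θ))|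
          * enorm2 (deriv (c t) θ))
    ≤ (1 / Real.sqrt A) *
      ∫ t in (0 : ℝ)..1,
        Real.sqrt (∫ θ in (0 : ℝ)..(2 * Real.pi),
          Ψ t θ * (dot2 (deriv (fun s => c s θ) t)
              (Jrot ((enorm2 (deriv (c t) θ))⁻¹ • deriv (c t) θ))) ^ 2
            * enorm2 (deriv (c t) θ)) := by
  set F := Function.uncurry c with hF
  have hdiff : Differentiable ℝ F := hc.differentiable (by simp)
  set Dθ : ℝ × ℝ → ℝ × ℝ := fun p => fderiv ℝ F p (0, 1) with hDθdef
  set Dt : ℝ × ℝ → ℝ × ℝ := fun p => fderiv ℝ F p (1, 0) with hDtdef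
  have hDθ : ∀ t θ, deriv (c t) θ = Dθ (t, θ) := by
    intro t θ
    have hγ : HasDerivAt (fun σ : ℝ => ((t : ℝ), σ)) ((0 : ℝ), (1 : ℝ)) θ :=
      (hasDerivAt_const θ t).prodMk (hasDerivAt_id θ)
    exact ((hdiff (t, θ)).hasFDerivAt.comp_hasDerivAt θ hγ).deriv
  have hDt : ∀ t θ, deriv (fun s => c s θ) t = Dt (t, θ) := by
    intro t θ
    have hγ : HasDerivAt (fun s : ℝ => (s, θ)) ((1 : ℝ), (0 : ℝ)) t :=
      (hasDerivAt_id t).prodMk (hasDerivAt_const t θ)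
    exact ((hdiff (t, θ)).hasFDerivAt.comp_hasDerivAt t hγ).deriv
  have hcDθ : Continuous Dθ := (hc.continuous_fderiv (by simp)).clm_apply continuous_const
  have hcDt : Continuous Dt := (hc.continuous_fderiv (by simp)).clm_apply continuous_const
  have hDθne : ∀ p : ℝ × ℝ, Dθ p ≠ 0 := by
    intro p; rw [← hDθ p.1 p.2]; exact hcimm p.1 p.2
  -- the jointly continuous integrands
  set w : ℝ × ℝ → ℝ := fun p => enorm2 (Dθ p) with hwdef
  set f : ℝ × ℝ → ℝ := fun p => dot2 (Dt p) (Jrot ((w p)⁻¹ • Dθ p)) with hfdef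
  have hcw : Continuous w := continuous_enorm2.comp hcDθ
  have hwpos : ∀ p, 0 < w p := fun p => enorm2_pos (hDθne p)
  have hcf : Continuous f := by
    have h1 : Continuous fun p : ℝ × ℝ => (Dt p, Jrot ((w p)⁻¹ • Dθ p)) :=
      hcDt.prodMk (continuous_Jrot.comp ((hcw.inv₀ fun p => (hwpos p).ne').smul hcDθ))
    exact continuous_dot2.comp h1
  simp only [hDθ, hDt]
  -- pointwise-in-time Cauchy–Schwarz bound
  have hmain : ∀ t : ℝ,
      (∫ θ in (0 : ℝ)..(2 * Real.pi), |f (t, θ)| * w (t, θ))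
        ≤ (1 / Real.sqrt A) *
          Real.sqrt (∫ θ in (0 : ℝ)..(2 * Real.pi), Ψ t θ * f (t, θ) ^ 2 * w (t, θ)) := by
    intro t
    apply cs_step _ _ _ _ _ (by positivity)
    · exact hcf.comp (Continuous.prodMk_right t)
    · exact hcw.comp (Continuous.prodMk_right t)
    · exact hΨcont.comp (Continuous.prodMk_right t)
    · intro θ; exact (hwpos _).le
    · exact hA
    · intro θ
      have := hΨ t θ
      simpa only [hDθ] using this
  -- joint continuity of the two time-integrands
  have hcL : Continuous fun t => ∫ θ in (0 : ℝ)..(2 * Real.pi), |f (t, θ)| * w (t, θ) := by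
    apply intervalIntegral.continuous_parametric_intervalIntegral_of_continuous'
    exact (hcf.abs.mul hcw)
  have hcR : Continuous fun t =>
      Real.sqrt (∫ θ in (0 : ℝ)..(2 * Real.pi), Ψ t θ * f (t, θ) ^ 2 * w (t, θ)) := by
    apply Real.continuous_sqrt.comp
    apply intervalIntegral.continuous_parametric_intervalIntegral_of_continuous'
    exact (hΨcont.mul (hcf.pow 2)).mul hcw
  calc (∫ t in (0 : ℝ)..1, ∫ θ in (0 : ℝ)..(2 * Real.pi), |f (t, θ)| * w (t, θ))
      ≤ ∫ t in (0 : ℝ)..1, (1 / Real.sqrt A) *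
          Real.sqrt (∫ θ in (0 : ℝ)..(2 * Real.pi), Ψ t θ * f (t, θ) ^ 2 * w (t, θ)) := by
        apply intervalIntegral.integral_mono_on (by norm_num)
        · exact hcL.intervalIntegrable _ _
        · exact (continuous_const.mul hcR).intervalIntegrable _ _
        · intro t _; exact hmain t
    _ = (1 / Real.sqrt A) * ∫ t in (0 : ℝ)..1,
          Real.sqrt (∫ θ in (0 : ℝ)..(2 * Real.pi), Ψ t θ * f (t, θ) ^ 2 * w (t, θ)) :=
        intervalIntegral.integral_const_mul _ _
end
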